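/- arXiv:1511.04039 — 3 statements merged into one kernel-verified Lean document; each statement's English description precedes it below -/
import Mathlib

section
/- Shift invariance of generalized Gončarov bases: if W = (z_i + ξ)_{i≥0} is the translation of the grid Z = (z_i) by ξ ∈ K, and (t_n), (h_n) are the generalized Gončarov bases for (𝔡, Z) and (𝔡, W) respectively, then h_n(x+ξ) = t_n(x) for all n. -/
open Polynomial

/-- The shift operator `E_a : K[x] → K[x]`, `f(x) ↦ f(x+a)`, as a linear endomorphism. -/
noncomputable def shiftOp (K : Type*) [Field K] (a : K) : Module.End K (Polynomial K) :=
  (aeval (X + C a) : Polynomial K →ₐ[K] Polynomial K).toLinearMap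

/-- A linear operator on `K[x]` is shift-invariant if it commutes with every shift `E_a`. -/
def IsShiftInvariant {K : Type*} [Field K] (s : Module.End K (Polynomial K)) : Prop :=
  ∀ a : K, s ∘ₗ shiftOp K a = shiftOp K a ∘ₗ s

/-- A delta operator: shift-invariant and sends `X` to a nonzero constant. -/
def IsDeltaOperator {K : Type*} [Field K] (d : Module.End K (Polynomial K)) : Prop :=
  IsShiftInvariant d ∧ ∃ c : K, c ≠ 0 ∧ d X = C c

/-- The sequence of basic polynomials of a delta operator `d`. -/
def IsBasicSequence {K : Type*} [Field K] (d : Module.End K (Polynomial K))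
    (p : ℕ → Polynomial K) : Prop :=
  p 0 = 1 ∧ (∀ n, 1 ≤ n → (p n).eval 0 = 0) ∧
    ∀ n, 1 ≤ n → d (p n) = (n : K) • p (n - 1)

/-- The generalized Gončarov basis associated with the pair `(d, z)`:
`deg t_n = n` and `ε_{z_i}(d^i t_n) = n! δ_{i,n}`. -/
def IsGoncarovBasis {K : Type*} [Field K] (d : Module.End K (Polynomial K))
    (z : ℕ → K) (t : ℕ → Polynomial K) : Prop :=
  ∀ n, (t n).natDegree = n ∧
    ∀ i, ((d ^ i) (t n)).eval (z i) = if i = n then (n.factorial : K) else 0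

/-!
A shift-invariant operator `s` is determined by the constants `(s Xᵏ)(0)`: evaluating `s f` at
`a` and moving the shift `E_a` across `s` turns the Taylor expansion of `f` at `a` into
`s = ∑ₖ (s Xᵏ)(0) • D⁽ᵏ⁾`, with `D⁽ᵏ⁾` the Hasse derivatives. For a delta operator, `d X = c ≠ 0`
forces `d` to kill constants, so the `k = 0` term vanishes and the `k = 1` term is `c • D`.
Thus `d` lowers degrees by one and `d^N f` is the nonzero constant `N! cᴺ lc(f)` when
`N = deg f`. Hence a polynomial of degree `≤ n` with `ε_{z_i}(d^i f) = 0` for `i ≤ n` is zero,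
and the Gončarov basis for `(d, Z)` is unique. Since `d` commutes with `E_ξ`, the polynomials
`h_n(x + ξ)` form a Gončarov basis for `(d, Z)`, so they are the `t_n`.
-/

open Finset

section Goncarov

variable {K : Type*} [Field K]

theorem shiftOp_eq_taylor (a : K) : shiftOp K a = taylor a :=
  LinearMap.ext fun f => by
    rw [taylor_apply]
    simp [shiftOp, comp, aeval_def, Polynomial.algebraMap_eq]

theorem isShiftInvariant_iff_commute {s : Module.End K K[X]} :
    IsShiftInvariant s ↔ ∀ a : K, Commute s (taylor a) := by
  simp only [IsShiftInvariant, shiftOp_eq_taylor, Commute, SemiconjBy, Module.End.mul_eq_comp]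

namespace IsShiftInvariant

variable {s : Module.End K K[X]}

theorem apply_taylor (hs : IsShiftInvariant s) (a : K) (f : K[X]) :
    s (taylor a f) = taylor a (s f) :=
  LinearMap.congr_fun ((isShiftInvariant_iff_commute.mp hs a).eq) f

theorem pow (hs : IsShiftInvariant s) (i : ℕ) : IsShiftInvariant (s ^ i) :=
  isShiftInvariant_iff_commute.mpr fun a => (isShiftInvariant_iff_commute.mp hs a).pow_left i

theorem apply_eq_sum_hasseDeriv [Infinite K] (hs : IsShiftInvariant s) {f : K[X]} {n : ℕ}
    (hn : f.natDegree < n) :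
    s f = ∑ k ∈ range n, (s (X ^ k)).eval 0 • hasseDeriv k f := by
  refine Polynomial.funext fun a => ?_
  have hexpand : taylor a f = ∑ k ∈ range n, (hasseDeriv k f).eval a • X ^ k := by
    conv_lhs => rw [(taylor a f).as_sum_range' n (by rwa [natDegree_taylor])]
    simp only [taylor_coeff, smul_X_eq_monomial]
  calc (s f).eval a = (taylor a (s f)).eval 0 := by rw [taylor_eval, zero_add]
    _ = (s (taylor a f)).eval 0 := by rw [hs.apply_taylor]
    _ = _ := by
      simp only [hexpand, map_sum, map_smul, eval_finsetSum, eval_smul, smul_eq_mul, mul_comm]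

end IsShiftInvariant

namespace IsDeltaOperator

variable {d : Module.End K K[X]}

theorem apply_C (hd : IsDeltaOperator d) (a : K) : d (C a) = 0 := by
  obtain ⟨c, -, hdX⟩ := hd.2
  have h := hd.1.apply_taylor a X
  rwa [taylor_X, map_add, hdX, taylor_C, add_eq_left] at h

section

variable [Infinite K]

theorem coeff_apply {c : K} (hd : IsDeltaOperator d) (hdX : d X = C c) {f : K[X]} {j : ℕ}
    (hf : f.natDegree ≤ j + 1) : (d f).coeff j = (j + 1) * c * f.coeff (j + 1) := by
  rw [hd.1.apply_eq_sum_hasseDeriv (Nat.lt_succ_of_le hf), finsetSum_coeff,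
    sum_eq_single_of_mem 1 (by simp)]
  · rw [coeff_smul, hasseDeriv_coeff, pow_one, hdX, eval_C, smul_eq_mul, Nat.choose_one_right]
    push_cast
    ring
  · intro k hk hk1
    rcases Nat.lt_or_gt_of_ne hk1 with hk0 | hk2
    · rw [Nat.lt_one_iff.mp hk0, pow_zero, ← C_1, hd.apply_C, eval_zero, zero_smul, coeff_zero]
    · rw [coeff_smul, hasseDeriv_coeff, coeff_eq_zero_of_natDegree_lt (by omega), mul_zero,
        smul_zero]

theorem natDegree_apply_le (hd : IsDeltaOperator d) {f : K[X]} {m : ℕ}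
    (hf : f.natDegree ≤ m + 1) : (d f).natDegree ≤ m := by
  obtain ⟨c, -, hdX⟩ := hd.2
  refine natDegree_le_iff_coeff_eq_zero.mpr fun j hj => ?_
  rw [hd.coeff_apply hdX (by omega), coeff_eq_zero_of_natDegree_lt (by omega), mul_zero]

theorem pow_apply_eq_C {c : K} (hd : IsDeltaOperator d) (hdX : d X = C c) {n : ℕ} {f : K[X]}
    (hf : f.natDegree ≤ n) : (d ^ n) f = C (n.factorial * c ^ n * f.coeff n) := by
  induction n generalizing f with
  | zero => simpa using eq_C_of_natDegree_le_zero hf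
  | succ n ih =>
    rw [pow_succ, Module.End.mul_apply, ih (hd.natDegree_apply_le hf), hd.coeff_apply hdX hf,
      Nat.factorial_succ]
    push_cast
    ring_nf

end

theorem eq_zero_of_eval_pow_apply_eq_zero [CharZero K] (hd : IsDeltaOperator d) (z : ℕ → K)
    {n : ℕ} {f : K[X]} (hf : f.natDegree ≤ n) (hz : ∀ i ≤ n, ((d ^ i) f).eval (z i) = 0) :
    f = 0 := by
  obtain ⟨c, hc, hdX⟩ := hd.2
  by_contra hf0
  have h := hz f.natDegree hf
  rw [hd.pow_apply_eq_C hdX le_rfl, eval_C, coeff_natDegree] at h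
  have hfact : (f.natDegree.factorial : K) ≠ 0 := Nat.cast_ne_zero.mpr (Nat.factorial_ne_zero _)
  exact mul_ne_zero (mul_ne_zero hfact (pow_ne_zero _ hc)) (leadingCoeff_ne_zero.mpr hf0) h

end IsDeltaOperator

namespace IsGoncarovBasis

variable {d : Module.End K K[X]} {z : ℕ → K}

theorem unique [CharZero K] (hd : IsDeltaOperator d) {t t' : ℕ → K[X]}
    (ht : IsGoncarovBasis d z t) (ht' : IsGoncarovBasis d z t') : t = t' := by
  funext n
  refine sub_eq_zero.mp (hd.eq_zero_of_eval_pow_apply_eq_zero z (n := n) ?_ fun i _ => ?_)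
  · exact (natDegree_sub_le _ _).trans (by rw [(ht n).1, (ht' n).1, max_self])
  · rw [map_sub, eval_sub, (ht n).2, (ht' n).2, sub_self]

theorem shift (hd : IsShiftInvariant d) (ξ : K) {h : ℕ → K[X]}
    (hh : IsGoncarovBasis d (fun i => z i + ξ) h) :
    IsGoncarovBasis d z fun n => taylor ξ (h n) := fun n =>
  ⟨by rw [natDegree_taylor, (hh n).1], fun i => by
    rw [(hd.pow i).apply_taylor, taylor_eval, (hh n).2]⟩

end IsGoncarovBasis

end Goncarov

theorem stmt9 {K : Type*} [Field K] [CharZero K] (d : Module.End K (Polynomial K))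
    (hd : IsDeltaOperator d) (z : ℕ → K) (ξ : K)
    (t h : ℕ → Polynomial K)
    (ht : IsGoncarovBasis d z t)
    (hh : IsGoncarovBasis d (fun i => z i + ξ) h) :
    ∀ n, (h n).comp (X + C ξ) = t n := fun n => by
  rw [← taylor_apply]
  exact congrFun ((hh.shift hd.1 ξ).unique hd ht) n
end

section
/- Fix ξ ∈ K and let W = (z_i + iξ)_{i≥0}. Then the generalized Gončarov basis associated with (𝔡, W) coincides with the generalized Gončarov basis associated with (E_ξ ∘ 𝔡, Z), where E_ξ is the shift operator by ξ. -/
open Polynomial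

/-! Shift-invariance makes `E_ξ` commute with `𝔡`, so `(E_ξ ∘ 𝔡)^i = E_{iξ} ∘ 𝔡^i`: evaluating it
at `z_i` is evaluating `𝔡^i` at `z_i + iξ`, and the two sets of Gončarov conditions coincide. -/

section Shift

variable {K : Type*} [Field K]

lemma shiftOp_apply (a : K) (f : K[X]) : shiftOp K a f = f.comp (X + C a) := rfl

lemma eval_shiftOp (a : K) (f : K[X]) (x : K) : (shiftOp K a f).eval x = f.eval (x + a) := by
  simp [shiftOp_apply, eval_comp]

lemma shiftOp_zero : shiftOp K (0 : K) = 1 := by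
  refine LinearMap.ext fun f => ?_
  simp [shiftOp_apply]

lemma shiftOp_add (a b : K) : shiftOp K (a + b) = shiftOp K a * shiftOp K b := by
  refine LinearMap.ext fun f => ?_
  simp only [Module.End.mul_apply, shiftOp_apply, comp_assoc, add_comp, X_comp, C_comp, C_add,
    add_assoc]

lemma shiftOp_pow (a : K) (n : ℕ) : shiftOp K a ^ n = shiftOp K ((n : K) * a) := by
  induction n with
  | zero => simp [shiftOp_zero]
  | succ n ih => rw [pow_succ, ih, ← shiftOp_add, Nat.cast_succ, add_one_mul]

lemma IsShiftInvariant.commute_shiftOp {d : Module.End K K[X]} (hd : IsShiftInvariant d) (a : K) :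
    Commute d (shiftOp K a) :=
  hd a

lemma IsShiftInvariant.shiftOp_comp_pow {d : Module.End K K[X]} (hd : IsShiftInvariant d)
    (a : K) (i : ℕ) : (shiftOp K a ∘ₗ d) ^ i = shiftOp K ((i : K) * a) ∘ₗ d ^ i := by
  rw [← Module.End.mul_eq_comp, ((hd.commute_shiftOp a).symm).mul_pow, shiftOp_pow,
    Module.End.mul_eq_comp]

lemma IsShiftInvariant.eval_shiftOp_comp_pow {d : Module.End K K[X]} (hd : IsShiftInvariant d)
    (a x : K) (i : ℕ) (f : K[X]) :
    (((shiftOp K a ∘ₗ d) ^ i) f).eval x = ((d ^ i) f).eval (x + (i : K) * a) := by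
  rw [hd.shiftOp_comp_pow, LinearMap.comp_apply, eval_shiftOp]

end Shift

theorem stmt10_general {K : Type*} [Field K] (d : Module.End K (Polynomial K))
    (hd : IsDeltaOperator d) (z : ℕ → K) (ξ : K) (t : ℕ → Polynomial K) :
    IsGoncarovBasis d (fun i => z i + (i : K) * ξ) t ↔
      IsGoncarovBasis (shiftOp K ξ ∘ₗ d) z t := by
  simp only [IsGoncarovBasis, hd.1.eval_shiftOp_comp_pow]

theorem stmt10 {K : Type*} [Field K] [CharZero K] (d : Module.End K (Polynomial K))
    (hd : IsDeltaOperator d) (z : ℕ → K) (ξ : K) (t : ℕ → Polynomial K) :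
    IsGoncarovBasis d (fun i => z i + (i : K) * ξ) t ↔
      IsGoncarovBasis (shiftOp K ξ ∘ₗ d) z t :=
  stmt10_general d hd z ξ t
end

section
/- Combinatorial formula for the constant term: if (t_n) is the generalized Gončarov basis for (𝔡, Z) and (p_n) the basic sequence of 𝔡, then for n ≥ 1, t_n(0) = Σ_{ρ} (−1)^{|ρ|} p_{b_1}(z_0) p_{b_2}(z_{s_1}) ⋯ p_{b_k}(z_{s_{k−1}}), where the sum is over all ordered partitions ρ = (B_1, …, B_k) of {1,…,n}, b_i = |B_i|, and s_i = b_1 + ⋯ + b_i. -/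
open Polynomial

/-!
Expanding `p n` in the basis `(t i)`, whose coordinates are read off by the biorthogonal
functionals `ε_{z_i} ∘ 𝔡^i`, gives `p n = ∑_{i ≤ n} (n choose i) p_{n-i}(z_i) • t i`; evaluating at
`0` yields the recurrence `t_n(0) = -∑_{i < n} (n choose i) p_{n-i}(z_i) t_i(0)` for `n ≥ 1`.
The ordered-partition sum obeys the same recurrence: removing the last block, of size `n - i`,
leaves an ordered partition of one of the `n choose i` subsets of size `i`, and the last block
contributes the factor `-p_{n-i}(z_i)`.
-/

open Finset
open scoped Nat

section DeltaOperator

variable {K : Type*} [Field K] {d : Module.End K K[X]} {p : ℕ → K[X]}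

theorem IsDeltaOperator.map_one (hd : IsDeltaOperator d) : d 1 = 0 := by
  obtain ⟨hshift, c, -, hX⟩ := hd
  have h : d (X + 1) = C c := by
    simpa [shiftOp, hX] using LinearMap.congr_fun (hshift 1) X
  simpa [hX] using h

namespace IsBasicSequence

theorem pow_apply_of_le (hp : IsBasicSequence d p) {i n : ℕ} (hin : i ≤ n) :
    (d ^ i) (p n) = (n.descFactorial i : K) • p (n - i) := by
  induction i with
  | zero => simp
  | succ i ih =>
    rw [pow_succ', Module.End.mul_apply, ih (by omega), map_smul, hp.2.2 _ (by omega), smul_smul,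
      Nat.descFactorial_succ, show n - i - 1 = n - (i + 1) by omega]
    push_cast
    ring_nf

theorem pow_apply_of_lt (hd : IsDeltaOperator d) (hp : IsBasicSequence d p) {i n : ℕ}
    (hni : n < i) : (d ^ i) (p n) = 0 := by
  obtain ⟨j, rfl⟩ := Nat.exists_eq_add_of_lt hni
  rw [add_assoc, add_comm, pow_add, Module.End.mul_apply, pow_succ, Module.End.mul_apply,
    hp.pow_apply_of_le le_rfl, Nat.sub_self, hp.1, map_smul, hd.map_one, smul_zero, map_zero]

end IsBasicSequence

end DeltaOperator

namespace IsGoncarovBasis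

variable {K : Type*} [Field K] {d : Module.End K K[X]} {z : ℕ → K} {t : ℕ → K[X]}

theorem apply_zero (ht : IsGoncarovBasis d z t) : t 0 = 1 := by
  have h := (ht 0).2 0
  rw [eq_C_of_natDegree_eq_zero (ht 0).1] at h ⊢
  simp_all

variable [CharZero K]

theorem ne_zero (ht : IsGoncarovBasis d z t) (n : ℕ) : t n ≠ 0 := by
  intro h
  simpa [h, eq_comm, Nat.factorial_ne_zero] using (ht n).2 n

noncomputable def basis (ht : IsGoncarovBasis d z t) : Module.Basis ℕ K K[X] :=
  Sequence.basis ⟨t, fun n => by rw [degree_eq_natDegree (ht.ne_zero n), (ht n).1]⟩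
    fun n => (leadingCoeff_ne_zero.mpr (ht.ne_zero n)).isUnit

theorem basis_apply (ht : IsGoncarovBasis d z t) (n : ℕ) : ht.basis n = t n :=
  Sequence.basis_eq_self ..

theorem basis_repr_apply (ht : IsGoncarovBasis d z t) (q : K[X]) (i : ℕ) :
    ht.basis.repr q i = ((d ^ i) q).eval (z i) / i ! := by
  have : Finsupp.lapply i ∘ₗ ht.basis.repr.toLinearMap =
      ((i ! : K)⁻¹) • (leval (z i) ∘ₗ d ^ i) := by
    refine ht.basis.ext fun n => ?_
    rw [LinearMap.comp_apply, LinearEquiv.coe_coe, Module.Basis.repr_self, LinearMap.smul_apply,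
      LinearMap.comp_apply, ht.basis_apply]
    simp only [Finsupp.lapply_apply, Finsupp.single_apply, leval_apply, (ht n).2, smul_eq_mul,
      eq_comm (a := n)]
    split_ifs with hin <;> simp [hin, Nat.factorial_ne_zero]
  simpa [div_eq_inv_mul] using LinearMap.congr_fun this q

theorem eq_sum (ht : IsGoncarovBasis d z t) (q : K[X]) {s : Finset ℕ}
    (hs : ∀ i ∉ s, ((d ^ i) q).eval (z i) = 0) :
    q = ∑ i ∈ s, (((d ^ i) q).eval (z i) / i !) • t i := by
  have hsupp : (ht.basis.repr q).support ⊆ s := fun i hi => by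
    by_contra his
    simp [basis_repr_apply, hs i his] at hi
  conv_lhs => rw [← ht.basis.linearCombination_repr q]
  rw [Finsupp.linearCombination_apply, Finsupp.sum_of_support_subset _ hsupp _ (by simp)]
  simp [basis_repr_apply, basis_apply]

end IsGoncarovBasis

section Expansion

variable {K : Type*} [Field K] [CharZero K] {d : Module.End K K[X]} {z : ℕ → K}
  {t p : ℕ → K[X]}

theorem IsBasicSequence.eq_sum_goncarov (hd : IsDeltaOperator d) (hp : IsBasicSequence d p)
    (ht : IsGoncarovBasis d z t) (n : ℕ) :
    p n = ∑ i ∈ range (n + 1), ((n.choose i : K) * (p (n - i)).eval (z i)) • t i := by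
  conv_lhs => rw [ht.eq_sum (p n) (s := range (n + 1)) fun i hi => by
    rw [hp.pow_apply_of_lt hd (by simpa using hi), eval_zero]]
  refine sum_congr rfl fun i hi => ?_
  rw [hp.pow_apply_of_le (by simpa [Nat.lt_succ_iff] using hi), eval_smul, smul_eq_mul,
    Nat.descFactorial_eq_factorial_mul_choose, Nat.cast_mul, mul_assoc, mul_div_cancel_left₀ _ (Nat.cast_ne_zero.2 i.factorial_ne_zero)]

theorem IsGoncarovBasis.eval_zero_eq (hd : IsDeltaOperator d) (ht : IsGoncarovBasis d z t)
    (hp : IsBasicSequence d p) {n : ℕ} (hn : 1 ≤ n) :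
    (t n).eval 0 = -∑ i ∈ range n, n.choose i * (p (n - i)).eval (z i) * (t i).eval 0 := by
  have h := congrArg (eval 0) (hp.eq_sum_goncarov hd ht n)
  rw [hp.2.1 n hn, eval_finsetSum, sum_range_succ] at h
  simp only [eval_smul, smul_eq_mul, Nat.choose_self, Nat.sub_self, hp.1, eval_one,
    Nat.cast_one, one_mul] at h
  linear_combination -h

end Expansion

section OrderedPartition

variable {K : Type*} [CommRing K] (p : ℕ → K[X]) (z : ℕ → K)

/-- A surjection `g : α → Fin k` encodes the ordered partition `(g⁻¹ {0}, …, g⁻¹ {k - 1})` of `α`. -/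
def partitionWeight {α : Type*} [Fintype α] {k : ℕ} (g : α → Fin k) : K :=
  (-1) ^ k * ∏ i : Fin k, (p #{a | g a = i}).eval (z #{a | g a < i})

def orderedPartitionSum (α : Type*) [Fintype α] [DecidableEq α] (k : ℕ) : K :=
  ∑ g : α → Fin k with Function.Surjective g, partitionWeight p z g

def orderedPartitionTotal (n : ℕ) : K :=
  ∑ k ∈ range (n + 1), orderedPartitionSum p z (Fin n) k

variable {p z} {α β : Type*} [Fintype α] [Fintype β]

theorem partitionWeight_comp_equiv (e : β ≃ α) {k : ℕ} (g : α → Fin k) :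
    partitionWeight p z (g ∘ e) = partitionWeight p z g := by
  have hcard (P : α → Prop) [DecidablePred P] : #{b | P (e b)} = #{a | P a} :=
    card_equiv e (by simp)
  refine congrArg _ (prod_congr rfl fun i _ => ?_)
  rw [Function.comp_def, hcard (g · = i), hcard (g · < i)]

variable [DecidableEq α] [DecidableEq β]

theorem orderedPartitionSum_congr (e : β ≃ α) (k : ℕ) :
    orderedPartitionSum p z β k = orderedPartitionSum p z α k := by
  refine sum_equiv (e.arrowCongr (Equiv.refl _)) (fun g => ?_) (fun g _ => ?_)
  · rw [mem_filter_univ, mem_filter_univ]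
    exact (e.symm.surjective_comp g).symm
  · rw [← partitionWeight_comp_equiv e]
    simp [Equiv.arrowCongr_apply, Function.comp_def]

theorem orderedPartitionSum_eq_zero_of_card_lt {k : ℕ} (h : Fintype.card α < k) :
    orderedPartitionSum p z α k = 0 :=
  sum_eq_zero fun g hg => absurd (Fintype.card_le_of_surjective g (mem_filter.1 hg).2)
    (by simpa using h)

theorem orderedPartitionSum_zero [Nonempty α] : orderedPartitionSum p z α 0 = 0 :=
  sum_eq_zero fun g _ => (g (Classical.arbitrary α)).elim0

theorem orderedPartitionTotal_zero : orderedPartitionTotal p z 0 = 1 := by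
  simp [orderedPartitionTotal, orderedPartitionSum, partitionWeight, Function.Surjective]

theorem partitionWeight_eq_neg_mul {k : ℕ} {T : Finset α} {g : α → Fin (k + 1)} {h : T → Fin k}
    (hT : ∀ a, a ∈ T ↔ g a ≠ Fin.last k) (hgh : ∀ a : T, g a = (h a).castSucc) :
    partitionWeight p z g =
      -(p (Fintype.card α - #T)).eval (z #T) * partitionWeight p z h := by
  have hrestrict (P : α → Prop) [DecidablePred P] (hP : ∀ a, P a → a ∈ T) :
      #{a : T | P a} = #{a | P a} :=
    card_bij (fun a _ => a.1) (by simp) (fun a _ b _ => Subtype.ext) fun a ha =>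
      ⟨⟨a, hP a ((mem_filter_univ _).1 ha)⟩, by simpa using ha, rfl⟩
  have hlast : #{a | g a = Fin.last k} = Fintype.card α - #T := by
    rw [← card_compl]
    congr 1
    ext a
    simp [hT]
  have hbelow_last : #{a | g a < Fin.last k} = #T := by
    congr 1
    ext a
    simp [hT, Fin.lt_last_iff_ne_last]
  have hfibre (i : Fin k) : #{a : T | h a = i} = #{a | g a = i.castSucc} := by
    rw [← hrestrict _ fun a (ha : g a = _) => (hT a).2 (ha ▸ (Fin.castSucc_lt_last i).ne)]
    simp [hgh]
  have hbelow (i : Fin k) : #{a : T | h a < i} = #{a | g a < i.castSucc} := by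
    rw [← hrestrict _ fun a (ha : g a < _) => (hT a).2 (ha.trans (Fin.castSucc_lt_last i)).ne]
    simp [hgh]
  rw [partitionWeight, partitionWeight, Fin.prod_univ_castSucc, hlast, hbelow_last]
  simp only [hfibre, hbelow]
  ring

def extendByLast {k : ℕ} (T : Finset α) (h : T → Fin k) (a : α) : Fin (k + 1) :=
  if ha : a ∈ T then (h ⟨a, ha⟩).castSucc else Fin.last k

theorem filter_extendByLast_ne_last {k : ℕ} (T : Finset α) (h : T → Fin k) :
    ({a | extendByLast T h a ≠ Fin.last k} : Finset α) = T := by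
  ext a
  by_cases ha : a ∈ T <;> simp [extendByLast, ha, (Fin.castSucc_lt_last _).ne]

theorem surjective_extendByLast {k : ℕ} {T : Finset α} (hT : T ≠ univ) {h : T → Fin k}
    (hh : Function.Surjective h) : Function.Surjective (extendByLast T h) := by
  intro b
  rcases Fin.eq_castSucc_or_eq_last b with ⟨b, rfl⟩ | rfl
  · obtain ⟨a, rfl⟩ := hh b
    exact ⟨a, by simp [extendByLast]⟩
  · obtain ⟨a, ha⟩ : ∃ a, a ∉ T := by
      by_contra! hall
      exact hT (eq_univ_iff_forall.2 hall)
    exact ⟨a, by simp [extendByLast, ha]⟩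

theorem sum_partitionWeight_of_nonLast_eq {k : ℕ} {T : Finset α} (hT : T ≠ univ) :
    ∑ g : α → Fin (k + 1) with Function.Surjective g ∧ ({a | g a ≠ Fin.last k} : Finset α) = T,
      partitionWeight p z g =
      -(p (Fintype.card α - #T)).eval (z #T) * orderedPartitionSum p z T k := by
  have mem_iff {g : α → Fin (k + 1)} (hg : ({a | g a ≠ Fin.last k} : Finset α) = T) (a : α) :
      a ∈ T ↔ g a ≠ Fin.last k := by
    rw [← hg]; simp
  rw [orderedPartitionSum, mul_sum]
  refine sum_bij' (fun g hg a => (g a).castPred ((mem_iff ((mem_filter_univ _).1 hg).2 a).1 a.2))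
    (fun h _ => extendByLast T h) (fun g hg => ?_) (fun h hh => ?_) (fun g hg => ?_)
    (fun h _ => ?_) (fun g hg => ?_)
  · rw [mem_filter_univ] at hg ⊢
    intro b
    obtain ⟨a, ha⟩ := hg.1 b.castSucc
    have haT : a ∈ T := (mem_iff hg.2 a).2 (ha ▸ (Fin.castSucc_lt_last b).ne)
    exact ⟨⟨a, haT⟩, by simp [ha]⟩
  · rw [mem_filter_univ] at hh ⊢
    exact ⟨surjective_extendByLast hT hh, filter_extendByLast_ne_last T h⟩
  · funext a
    by_cases ha : a ∈ T
    · simp [extendByLast, ha]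
    · simpa [extendByLast, ha, eq_comm] using (mem_iff ((mem_filter_univ _).1 hg).2 a).not.1 ha
  · funext a
    simp [extendByLast]
  · exact partitionWeight_eq_neg_mul (mem_iff ((mem_filter_univ _).1 hg).2)
      fun a => (Fin.castSucc_castPred _ _).symm

theorem orderedPartitionSum_succ (k : ℕ) :
    orderedPartitionSum p z α (k + 1) = ∑ T ∈ (univ : Finset (Finset α)).erase univ,
      -(p (Fintype.card α - #T)).eval (z #T) * orderedPartitionSum p z T k := by
  rw [orderedPartitionSum, ← sum_fiberwise_of_maps_to
    (g := fun g : α → Fin (k + 1) => ({a | g a ≠ Fin.last k} : Finset α)) (t := univ.erase univ)]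
  · refine sum_congr rfl fun T hT => ?_
    rw [filter_filter]
    exact sum_partitionWeight_of_nonLast_eq (ne_of_mem_erase hT)
  · intro g hg
    refine mem_erase.2 ⟨fun h => ?_, mem_univ _⟩
    obtain ⟨a, ha⟩ := (mem_filter_univ _).1 hg (Fin.last k)
    have : a ∈ ({a | g a ≠ Fin.last k} : Finset α) := by
      rw [h]
      exact mem_univ a
    simp [ha] at this

theorem orderedPartitionSum_fin_succ (n k : ℕ) :
    orderedPartitionSum p z (Fin n) (k + 1) = ∑ i ∈ range n,
      n.choose i * (-(p (n - i)).eval (z i) * orderedPartitionSum p z (Fin i) k) := by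
  set f : ℕ → K := fun i => -(p (n - i)).eval (z i) * orderedPartitionSum p z (Fin i) k
  calc orderedPartitionSum p z (Fin n) (k + 1) = ∑ T ∈ univ.erase univ, f #T := by
        rw [orderedPartitionSum_succ, Fintype.card_fin]
        exact sum_congr rfl fun T _ => by rw [orderedPartitionSum_congr T.equivFin]
    _ = ∑ T ∈ (univ : Finset (Fin n)).powerset, f #T - f n := by
        rw [sum_erase_eq_sub (mem_univ _), powerset_univ, card_univ, Fintype.card_fin]
    _ = ∑ i ∈ range n, n.choose i * f i := by
        rw [sum_powerset_apply_card, card_univ, Fintype.card_fin, sum_range_succ, Nat.choose_self,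
          one_smul, add_sub_cancel_right]
        simp only [nsmul_eq_mul]

theorem sum_range_orderedPartitionSum {n N : ℕ} (h : n < N) :
    ∑ k ∈ range N, orderedPartitionSum p z (Fin n) k = orderedPartitionTotal p z n := by
  refine (sum_subset (range_subset_range.2 h) fun k _ hk => ?_).symm
  exact orderedPartitionSum_eq_zero_of_card_lt (by simp at hk ⊢; omega)

theorem orderedPartitionTotal_eq {n : ℕ} (hn : 1 ≤ n) :
    orderedPartitionTotal p z n =
      -∑ i ∈ range n, n.choose i * (p (n - i)).eval (z i) * orderedPartitionTotal p z i := by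
  have : Nonempty (Fin n) := ⟨⟨0, hn⟩⟩
  calc orderedPartitionTotal p z n = ∑ k ∈ range n, orderedPartitionSum p z (Fin n) (k + 1) := by
        rw [orderedPartitionTotal, sum_range_succ', orderedPartitionSum_zero, add_zero]
    _ = ∑ i ∈ range n, n.choose i * (-(p (n - i)).eval (z i) *
          ∑ k ∈ range n, orderedPartitionSum p z (Fin i) k) := by
        simp only [orderedPartitionSum_fin_succ, mul_sum]
        exact sum_comm
    _ = _ := by
        rw [← sum_neg_distrib]
        refine sum_congr rfl fun i hi => ?_
        rw [sum_range_orderedPartitionSum (mem_range.1 hi)]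
        ring

theorem orderedPartitionTotal_eq_sum_Icc {n : ℕ} (hn : 1 ≤ n) :
    orderedPartitionTotal p z n = ∑ k ∈ Icc 1 n, orderedPartitionSum p z (Fin n) k := by
  have : Nonempty (Fin n) := ⟨⟨0, hn⟩⟩
  rw [orderedPartitionTotal, range_eq_Ico, sum_eq_sum_Ico_succ_bot (by omega),
    orderedPartitionSum_zero, zero_add, zero_add, Ico_add_one_right_eq_Icc]

end OrderedPartition

theorem stmt17 {K : Type*} [Field K] [CharZero K] (d : Module.End K (Polynomial K))
    (hd : IsDeltaOperator d) (z : ℕ → K) (t p : ℕ → Polynomial K)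
    (ht : IsGoncarovBasis d z t) (hp : IsBasicSequence d p) :
    ∀ n, 1 ≤ n → (t n).eval 0 =
      ∑ k ∈ Finset.Icc 1 n,
        ∑ g ∈ Finset.univ.filter (fun g : Fin n → Fin k => Function.Surjective g),
          (-1 : K) ^ k *
            ∏ i : Fin k,
              (p ((Finset.univ.filter (fun m => g m = i)).card)).eval
                (z ((Finset.univ.filter (fun m => g m < i)).card)) := by
  have eval_zero_eq_total (n : ℕ) : (t n).eval 0 = orderedPartitionTotal p z n := by
    induction n using Nat.strong_induction_on with
    | _ n ih =>
      obtain rfl | hn := Nat.eq_zero_or_pos n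
      · rw [ht.apply_zero, eval_one, orderedPartitionTotal_zero]
      · rw [ht.eval_zero_eq hd hp hn, orderedPartitionTotal_eq hn]
        exact congrArg _ (sum_congr rfl fun i hi => by rw [ih i (mem_range.1 hi)])
  intro n hn
  rw [eval_zero_eq_total, orderedPartitionTotal_eq_sum_Icc hn]
  rfl
end
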